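/- Let N > 2 be an integer, p > 1, and k < 0 with k²·(1-p) + k·(p-N) < 0 (so that H'(0) < 0). Let 0 < b ≤ π and suppose H : [0, b) → ℝ is differentiable on [0, b) with continuous derivative, H(0) = 0, H'(0) < 0, and H satisfies the H-equation on (0, b). Then H(x) < 0 and H'(x) < 0 for all x ∈ (0, b). -/

import Mathlib

noncomputable section
open Real Set Filter Topology

/-- `H` satisfies the first-order H-equation (for parameters `p`, `N`, `k`) on the set `I`:
`((p-1)H² + k²)H' = (1-p)(H² + k²)² + (H² + k²)(k(p-N) + (2-N)·H·cot x)`. -/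
def HEqOn (p : ℝ) (N : ℕ) (k : ℝ) (H : ℝ → ℝ) (I : Set ℝ) : Prop :=
  ∀ x ∈ I,
    ((p - 1) * (H x) ^ 2 + k ^ 2) * deriv H x =
      (1 - p) * ((H x) ^ 2 + k ^ 2) ^ 2
        + ((H x) ^ 2 + k ^ 2) * (k * (p - (N : ℝ)) + (2 - (N : ℝ)) * H x * Real.cot x)

/-! Both claims are proved by a first-crossing argument. Near `0` both `H` and `H'` are negative.
At a first zero `c` of `H` the equation gives `H'(c) = k²(1-p) + k(p-N) < 0`, impossible for a
function coming up to `0` from below. At a first zero `c` of `H'` the equation can be solved for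
`H'` and differentiated: since `H'(c) = 0`, only the `cot` term contributes, and
`H''(c) = (2-N)·H(c)·(H(c)² + k²) / ((p-1)H(c)² + k²) · cot'(c) < 0` because `H(c) < 0`,
`N > 2` and `cot' = -1/sin² < 0` on `(0, π)`; again impossible. -/

lemma nonneg_of_hasDerivAt_of_lt_left {f : ℝ → ℝ} {f' a c : ℝ} (hf : HasDerivAt f f' c)
    (hac : a < c) (hlt : ∀ x ∈ Ioo a c, f x < f c) : 0 ≤ f' := by
  have hslope : Tendsto (slope f c) (𝓝[<] c) (𝓝 f') :=
    (hasDerivWithinAt_iff_tendsto_slope' (s := Iio c) (lt_irrefl c)).1 hf.hasDerivWithinAt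
  refine ge_of_tendsto hslope ?_
  filter_upwards [Ioo_mem_nhdsLT hac] with x hx
  rw [slope_def_field]
  exact div_nonneg_of_nonpos (by linarith [hlt x hx]) (by linarith [hx.2])

lemma HasDerivWithinAt.eventually_nhdsGT_lt {f : ℝ → ℝ} {f' a : ℝ}
    (hf : HasDerivWithinAt f f' (Ici a) a) (hf' : f' < 0) : ∀ᶠ x in 𝓝[>] a, f x < f a := by
  filter_upwards [hf.Ioi_of_Ici.limsup_slope_le' (lt_irrefl a) hf', self_mem_nhdsWithin]
    with x hslope (hx : a < x)
  rw [slope_def_field, div_neg_iff] at hslope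
  rcases hslope with h | h <;> linarith [h.1, h.2]

lemma forall_neg_of_no_first_zero {F : ℝ → ℝ} {a b : ℝ} (hF : ContinuousOn F (Ioo a b))
    (hstart : ∀ᶠ x in 𝓝[>] a, F x < 0)
    (hzero : ∀ c ∈ Ioo a b, F c = 0 → (∀ x ∈ Ioo a c, F x < 0) → False) :
    ∀ x ∈ Ioo a b, F x < 0 := by
  intro x₀ hx₀
  by_contra! hFx₀
  obtain ⟨u, hau : a < u, hu⟩ :=
    mem_nhdsGT_iff_exists_Ioo_subset.1 (hstart.and (Ioo_mem_nhdsGT hx₀.1))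
  obtain ⟨hFa', haa', ha'x₀⟩ : F ((a + u) / 2) < 0 ∧ (a + u) / 2 ∈ Ioo a x₀ :=
    hu ⟨by linarith, by linarith⟩
  set a' := (a + u) / 2 with ha'
  have hsub : Icc a' x₀ ⊆ Ioo a b := Icc_subset_Ioo haa' hx₀.2
  set Z := Icc a' x₀ ∩ F ⁻¹' {0}
  have hZ : IsClosed Z :=
    (hF.mono hsub).preimage_isClosed_of_isClosed isClosed_Icc isClosed_singleton
  have hZne : Z.Nonempty :=
    intermediate_value_Icc ha'x₀.le (hF.mono hsub) ⟨hFa'.le, hFx₀⟩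
  have hZbdd : BddBelow Z := ⟨a', fun y hy => hy.1.1⟩
  have hcZ : sInf Z ∈ Z := hZ.csInf_mem hZne hZbdd
  refine hzero (sInf Z) (hsub hcZ.1) hcZ.2 fun x hx => ?_
  by_contra! hFx
  rcases lt_or_ge x a' with hxa' | hxa'
  · exact (hu ⟨hx.1, hxa'.trans (by linarith)⟩).1.not_ge hFx
  · have hxx₀ : x ≤ x₀ := hx.2.le.trans hcZ.1.2
    obtain ⟨y, hy, hFy⟩ := intermediate_value_Icc hxa'
      (hF.mono ((Icc_subset_Icc_right hxx₀).trans hsub)) ⟨hFa'.le, hFx⟩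
    have : sInf Z ≤ y := csInf_le hZbdd ⟨⟨hy.1, hy.2.trans hxx₀⟩, hFy⟩
    linarith [hy.2, hx.2]

lemma ContinuousWithinAt.eventually_nhdsGT_deriv_lt {f : ℝ → ℝ} {a b r : ℝ} (hab : a < b)
    (hf : ContinuousWithinAt (derivWithin f (Ici a)) (Ico a b) a)
    (hr : derivWithin f (Ici a) a < r) :
    ∀ᶠ x in 𝓝[>] a, deriv f x < r := by
  rw [← nhdsWithin_Ioo_eq_nhdsGT hab]
  filter_upwards [nhdsWithin_mono a Ioo_subset_Ico_self (hf.eventually_lt_const hr),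
    self_mem_nhdsWithin] with x hx hxb
  rwa [derivWithin_of_mem_nhds (Ici_mem_nhds hxb.1)] at hx

lemma Real.hasDerivAt_cot {x : ℝ} (hx : sin x ≠ 0) : HasDerivAt cot (-1 / sin x ^ 2) x := by
  have hcot : cot = fun y => cos y / sin y := funext cot_eq_cos_div_sin
  rw [hcot]
  refine ((hasDerivAt_cos x).div (hasDerivAt_sin x) hx).congr_deriv ?_
  rw [← sin_sq_add_cos_sq x]
  ring

lemma HasDerivAt.comp_add_comp_mul_of_critical {u A B g : ℝ → ℝ} {g' x : ℝ}
    (hu : HasDerivAt u 0 x) (hA : DifferentiableAt ℝ A (u x)) (hB : DifferentiableAt ℝ B (u x))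
    (hg : HasDerivAt g g' x) :
    HasDerivAt (fun y => A (u y) + B (u y) * g y) (B (u x) * g') x := by
  have hAu : HasDerivAt (fun y => A (u y)) 0 x :=
    (hA.hasDerivAt.comp x hu).congr_deriv (mul_zero _)
  have hBu : HasDerivAt (fun y => B (u y)) 0 x :=
    (hB.hasDerivAt.comp x hu).congr_deriv (mul_zero _)
  exact (hAu.add (hBu.mul hg)).congr_deriv (by ring)

section HEquation

variable {p k : ℝ} {N : ℕ}

/-- With `hEquationCotCoeff`, the H-equation solved for `H'`:
`H' = hEquationDrift p N k H + hEquationCotCoeff p N k H * cot x` (see `HEqOn.deriv_eq`). -/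
def hEquationDrift (p : ℝ) (N : ℕ) (k h : ℝ) : ℝ :=
  ((1 - p) * (h ^ 2 + k ^ 2) ^ 2 + (h ^ 2 + k ^ 2) * (k * (p - N))) / ((p - 1) * h ^ 2 + k ^ 2)

def hEquationCotCoeff (p : ℝ) (N : ℕ) (k h : ℝ) : ℝ :=
  (h ^ 2 + k ^ 2) * ((2 - N) * h) / ((p - 1) * h ^ 2 + k ^ 2)

lemma hEquation_denom_pos (hp : 1 < p) (hk : k ≠ 0) (h : ℝ) : 0 < (p - 1) * h ^ 2 + k ^ 2 := by
  have : 0 < k ^ 2 := by positivity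
  nlinarith [sq_nonneg h]

lemma differentiable_hEquationDrift (hp : 1 < p) (hk : k ≠ 0) :
    Differentiable ℝ (hEquationDrift p N k) :=
  fun h => DifferentiableAt.div (by fun_prop) (by fun_prop) (hEquation_denom_pos hp hk h).ne'

lemma differentiable_hEquationCotCoeff (hp : 1 < p) (hk : k ≠ 0) :
    Differentiable ℝ (hEquationCotCoeff p N k) :=
  fun h => DifferentiableAt.div (by fun_prop) (by fun_prop) (hEquation_denom_pos hp hk h).ne'

lemma hEquationDrift_zero (hk : k ≠ 0) :
    hEquationDrift p N k 0 = k ^ 2 * (1 - p) + k * (p - N) := by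
  unfold hEquationDrift
  field_simp
  ring

lemma hEquationCotCoeff_pos (hN : 2 < N) (hp : 1 < p) (hk : k ≠ 0) {h : ℝ} (hh : h < 0) :
    0 < hEquationCotCoeff p N k h := by
  have hN' : (2 : ℝ) < N := by exact_mod_cast hN
  unfold hEquationCotCoeff
  have : 0 < (2 - N) * h := mul_pos_of_neg_of_neg (by linarith) hh
  exact div_pos (by positivity) (hEquation_denom_pos hp hk h)

variable {H : ℝ → ℝ} {I : Set ℝ}

lemma HEqOn.deriv_eq (heq : HEqOn p N k H I) (hp : 1 < p) (hk : k ≠ 0) {x : ℝ} (hx : x ∈ I) :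
    deriv H x = hEquationDrift p N k (H x) + hEquationCotCoeff p N k (H x) * cot x := by
  have hD := (hEquation_denom_pos hp hk (H x)).ne'
  unfold hEquationDrift hEquationCotCoeff
  rw [div_mul_eq_mul_div, ← add_div, eq_div_iff hD]
  linear_combination heq x hx

lemma HEqOn.deriv_eq_of_eq_zero (heq : HEqOn p N k H I) (hp : 1 < p) (hk : k ≠ 0) {x : ℝ}
    (hx : x ∈ I) (hH : H x = 0) : deriv H x = k ^ 2 * (1 - p) + k * (p - N) := by
  simp [heq.deriv_eq hp hk hx, hH, hEquationDrift_zero hk, hEquationCotCoeff]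

lemma HEqOn.hasDerivAt_deriv_of_deriv_eq_zero (heq : HEqOn p N k H I) (hp : 1 < p) (hk : k ≠ 0)
    {x : ℝ} (hI : I ∈ 𝓝 x) (hH : HasDerivAt H 0 x) (hx : sin x ≠ 0) :
    HasDerivAt (deriv H) (hEquationCotCoeff p N k (H x) * (-1 / sin x ^ 2)) x := by
  refine (hH.comp_add_comp_mul_of_critical (differentiable_hEquationDrift (N := N) hp hk _)
    (differentiable_hEquationCotCoeff hp hk _) (hasDerivAt_cot hx)).congr_of_eventuallyEq ?_
  filter_upwards [hI] with y hy using heq.deriv_eq hp hk hy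

end HEquation

/-- If `H` solves the H-equation on `(0,b)` with `H(0) = 0` and negative initial slope,
then `H < 0` and `H' < 0` on `(0,b)`. -/
theorem H_decreasing (N : ℕ) (hN : 2 < N) (p : ℝ) (hp : 1 < p) (k : ℝ) (hk : k < 0)
    (hslope : k ^ 2 * (1 - p) + k * (p - (N : ℝ)) < 0)
    (b : ℝ) (hb0 : 0 < b) (hb : b ≤ π)
    (H : ℝ → ℝ)
    (hd : ∀ x ∈ Ico (0 : ℝ) b, DifferentiableWithinAt ℝ H (Ici 0) x)
    (hdc : ContinuousOn (derivWithin H (Ici 0)) (Ico 0 b))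
    (hH0 : H 0 = 0)
    (hH'0 : derivWithin H (Ici 0) 0 < 0)
    (heq : HEqOn p N k H (Ioo 0 b)) :
    ∀ x ∈ Ioo (0 : ℝ) b, H x < 0 ∧ deriv H x < 0 := by
  have hk0 : k ≠ 0 := hk.ne
  have h0 : (0 : ℝ) ∈ Ico 0 b := ⟨le_rfl, hb0⟩
  have hHd : ∀ x ∈ Ioo 0 b, HasDerivAt H (deriv H x) x := fun x hx =>
    ((hd x (Ioo_subset_Ico_self hx)).differentiableAt (Ici_mem_nhds hx.1)).hasDerivAt
  have hH'cont : ContinuousOn (deriv H) (Ioo 0 b) :=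
    (hdc.mono Ioo_subset_Ico_self).congr fun x hx =>
      (derivWithin_of_mem_nhds (Ici_mem_nhds hx.1)).symm
  have hHneg : ∀ x ∈ Ioo 0 b, H x < 0 := by
    refine forall_neg_of_no_first_zero (fun x hx => (hHd x hx).continuousAt.continuousWithinAt)
      (by simpa only [hH0] using (hd 0 h0).hasDerivWithinAt.eventually_nhdsGT_lt hH'0)
      fun c hc hHc hleft => ?_
    have hH'c := nonneg_of_hasDerivAt_of_lt_left (hHd c hc) hc.1 (by simpa only [hHc] using hleft)
    rw [heq.deriv_eq_of_eq_zero hp hk0 hc hHc] at hH'c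
    exact hH'c.not_gt hslope
  refine fun x hx => ⟨hHneg x hx, forall_neg_of_no_first_zero hH'cont
    ((hdc 0 h0).eventually_nhdsGT_deriv_lt hb0 hH'0) (fun c hc hH'c hleft => ?_) x hx⟩
  have hsin : 0 < sin c := sin_pos_of_pos_of_lt_pi hc.1 (hc.2.trans_le hb)
  have hH'' := heq.hasDerivAt_deriv_of_deriv_eq_zero hp hk0 (isOpen_Ioo.mem_nhds hc)
    (hH'c ▸ hHd c hc) hsin.ne'
  have hH''neg : hEquationCotCoeff p N k (H c) * (-1 / sin c ^ 2) < 0 :=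
    mul_neg_of_pos_of_neg (hEquationCotCoeff_pos hN hp hk0 (hHneg c hc))
      (div_neg_of_neg_of_pos (by norm_num) (by positivity))
  exact (nonneg_of_hasDerivAt_of_lt_left hH'' hc.1 (by simpa only [hH'c] using hleft)).not_gt
    hH''neg
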